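/- arXiv:1705.00790 — 2 statements merged into one kernel-verified Lean document; each statement's English description precedes it below -/
import Mathlib

section
/- Let (j_!, j^*, j_*) and (i^*, i_*, i^!) be gluing data between triangulated categories D_U, D_Z, D_X (recollement). Given t-structures on D_U and D_Z, define D^{≤}(X) = {a | j^*a ∈ D^{≤}(U), i^*a ∈ D^{≤}(Z)} and D^{>}(X) = {a | j^*a ∈ D^{>}(U), i^!a ∈ D^{>}(Z)}. Then for a ∈ D^{≤}(X) and b ∈ D^{>}(X), Hom(a,b) = 0. -/
open CategoryTheory Category Limits Pretriangulated

variable {DU DZ DX : Type*}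
  [Category DU] [HasZeroObject DU] [Preadditive DU] [HasShift DU ℤ]
  [∀ n : ℤ, (shiftFunctor DU n).Additive] [Pretriangulated DU]
  [Category DZ] [HasZeroObject DZ] [Preadditive DZ] [HasShift DZ ℤ]
  [∀ n : ℤ, (shiftFunctor DZ n).Additive] [Pretriangulated DZ]
  [Category DX] [HasZeroObject DX] [Preadditive DX] [HasShift DX ℤ]
  [∀ n : ℤ, (shiftFunctor DX n).Additive] [Pretriangulated DX]

/-- A t-structure on a triangulated category. -/
structure IsTStructure {D : Type*} [Category D] [HasZeroObject D] [Preadditive D]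
    [HasShift D ℤ] [∀ n : ℤ, (shiftFunctor D n).Additive] [Pretriangulated D]
    (A B : Set D) : Prop where
  isoClosedA : ∀ ⦃x y : D⦄, (x ≅ y) → x ∈ A → y ∈ A
  isoClosedB : ∀ ⦃x y : D⦄, (x ≅ y) → x ∈ B → y ∈ B
  orth : ∀ a ∈ A, ∀ b ∈ B, ∀ f : a ⟶ b, f = 0
  shiftA : ∀ a ∈ A, a⟦(1 : ℤ)⟧ ∈ A
  shiftB : ∀ b ∈ B, b⟦(-1 : ℤ)⟧ ∈ B
  decomp : ∀ c, ∃ (a b : _) (_ : a ∈ A) (_ : b ∈ B)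
    (f : a ⟶ c) (g : c ⟶ b) (h : b ⟶ a⟦(1 : ℤ)⟧), Triangle.mk f g h ∈ distTriang D

/-! Precompose `f : a ⟶ b` with the localization triangle `j_!j^*a → a → i_*i^*a →`.
By adjunction `Hom(j_!j^*a, b) = Hom(j^*a, j^*b) = 0`, so `f` factors through `i_*i^*a`, and
`Hom(i_*i^*a, b) = Hom(i^*a, i^!b) = 0`. -/

lemma CategoryTheory.Adjunction.eq_zero_of_forall_eq_zero {C D : Type*} [Category C]
    [Category D] [HasZeroMorphisms C] [HasZeroMorphisms D] {F : C ⥤ D} {G : D ⥤ C}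
    (adj : F ⊣ G) {x : C} {y : D} (h : ∀ g : x ⟶ G.obj y, g = 0) (f : F.obj x ⟶ y) :
    f = 0 :=
  (adj.homEquiv x y).injective ((h _).trans (h _).symm)

lemma CategoryTheory.Pretriangulated.eq_zero_of_mor₁_comp_eq_zero {C : Type*} [Category C]
    [Preadditive C] [HasZeroObject C] [HasShift C ℤ] [∀ n : ℤ, (shiftFunctor C n).Additive]
    [Pretriangulated C] {T : Triangle C} (hT : T ∈ distTriang C) {b : C}
    (h₃ : ∀ g : T.obj₃ ⟶ b, g = 0) (f : T.obj₂ ⟶ b) (hf : T.mor₁ ≫ f = 0) : f = 0 := by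
  obtain ⟨g, rfl⟩ := Triangle.yoneda_exact₂ T hT f hf
  rw [h₃ g, comp_zero]

theorem stmt12_general
    (jShriek : DU ⥤ DX) (jStar : DX ⥤ DU)
    (iStar : DX ⥤ DZ) (iLower : DZ ⥤ DX) (iShriek : DX ⥤ DZ)
    (adj1 : jShriek ⊣ jStar)
    (adj3 : iStar ⊣ iLower) (adj4 : iLower ⊣ iShriek)
    (loc1 : ∀ A : DX, ∃ h : iLower.obj (iStar.obj A) ⟶ (jShriek.obj (jStar.obj A))⟦(1 : ℤ)⟧,
      Triangle.mk (adj1.counit.app A) (adj3.unit.app A) h ∈ distTriang DX)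
    (AU BU : Set DU) (AZ BZ : Set DZ)
    (tU : IsTStructure AU BU) (tZ : IsTStructure AZ BZ) :
    ∀ a b : DX,
      jStar.obj a ∈ AU → iStar.obj a ∈ AZ →
      jStar.obj b ∈ BU → iShriek.obj b ∈ BZ →
      ∀ f : a ⟶ b, f = 0 := by
  intro a b haU haZ hbU hbZ f
  obtain ⟨h, hT⟩ := loc1 a
  refine eq_zero_of_mor₁_comp_eq_zero hT ?_ f ?_
  · exact adj4.eq_zero_of_forall_eq_zero (tZ.orth _ haZ _ hbZ)
  · exact adj1.eq_zero_of_forall_eq_zero (tU.orth _ haU _ hbU) _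

/-- in a recollement `(j_!, j^*, j_*)`, `(i^*, i_*, i^!)` of `D_X` by `D_U` and
`D_Z`, given t-structures on `D_U` and `D_Z`, the glued classes
`D^{≤}(X) = {a | j^*a ∈ D^{≤}(U), i^*a ∈ D^{≤}(Z)}` and
`D^{>}(X) = {a | j^*a ∈ D^{>}(U), i^!a ∈ D^{>}(Z)}` are orthogonal: `Hom(a, b) = 0`. -/
theorem stmt12
    (jShriek : DU ⥤ DX) (jStar : DX ⥤ DU) (jLower : DU ⥤ DX)
    (iStar : DX ⥤ DZ) (iLower : DZ ⥤ DX) (iShriek : DX ⥤ DZ)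
    (adj1 : jShriek ⊣ jStar) (adj2 : jStar ⊣ jLower)
    (adj3 : iStar ⊣ iLower) (adj4 : iLower ⊣ iShriek)
    (hvanish : ∀ z : DZ, IsZero (jStar.obj (iLower.obj z)))
    (loc1 : ∀ A : DX, ∃ h : iLower.obj (iStar.obj A) ⟶ (jShriek.obj (jStar.obj A))⟦(1 : ℤ)⟧,
      Triangle.mk (adj1.counit.app A) (adj3.unit.app A) h ∈ distTriang DX)
    (loc2 : ∀ A : DX, ∃ h : jLower.obj (jStar.obj A) ⟶ (iLower.obj (iShriek.obj A))⟦(1 : ℤ)⟧,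
      Triangle.mk (adj4.counit.app A) (adj2.unit.app A) h ∈ distTriang DX)
    (hu1 : IsIso adj1.unit) (hc2 : IsIso adj2.counit)
    (hc3 : IsIso adj3.counit) (hu4 : IsIso adj4.unit)
    (AU BU : Set DU) (AZ BZ : Set DZ)
    (tU : IsTStructure AU BU) (tZ : IsTStructure AZ BZ) :
    ∀ a b : DX,
      jStar.obj a ∈ AU → iStar.obj a ∈ AZ →
      jStar.obj b ∈ BU → iShriek.obj b ∈ BZ →
      ∀ f : a ⟶ b, f = 0 :=
  stmt12_general jShriek jStar iStar iLower iShriek adj1 adj3 adj4 loc1 AU BU AZ BZ tU tZ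
end

section
/- In a recollement of triangulated categories D_Z → D_X ← D_U with glued subcategories defined punctually as above from t-structures on D_U and D_Z, every object h ∈ D_X admits a distinguished triangle v → h → w → with v ∈ D^{≤}(X) and w ∈ D^{>}(X). Hence the glued pair is a t-structure on D_X. -/
/-!
Following BBD: given `h`, truncate `j^* h` as `a_U → j^* h → b_U` and let `v₁ → h` be the fibre
of `h → j_* b_U`; then `j^* v₁ ≅ a_U` because `j^* j_* ≅ 𝟭`. Truncate `i^* v₁` as
`a_Z → i^* v₁ → b_Z` and let `v → v₁` be the fibre of `v₁ → i_* b_Z`; then `i^* v ≅ a_Z`, and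
`j^* v ≅ j^* v₁` because `j^* i_* = 0`. Let `w` be the cone of the composite `v → h`. Since `j^*`
inverts `v → v₁`, it identifies `w` with the cone `j_* b_U` of `v₁ → h`, so `j^* w ≅ b_U`; since
`i^! j_* = 0`, the functor `i^!` inverts `v₁ → h` and identifies `w` with the cone `i_* b_Z` of
`v → v₁`, so `i^! w ≅ b_Z`. These comparisons only use that a distinguished triangle is
determined up to isomorphism by one of its morphisms, so no octahedron is needed.
Orthogonality follows from the triangle `i_* i^! b → b → j_* j^* b →` and adjunction.
-/

open CategoryTheory Category Limits Pretriangulated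

variable {DU DZ DX : Type*}
  [Category DU] [HasZeroObject DU] [Preadditive DU] [HasShift DU ℤ]
  [∀ n : ℤ, (shiftFunctor DU n).Additive] [Pretriangulated DU]
  [Category DZ] [HasZeroObject DZ] [Preadditive DZ] [HasShift DZ ℤ]
  [∀ n : ℤ, (shiftFunctor DZ n).Additive] [Pretriangulated DZ]
  [Category DX] [HasZeroObject DX] [Preadditive DX] [HasShift DX ℤ]
  [∀ n : ℤ, (shiftFunctor DX n).Additive] [Pretriangulated DX]

namespace CategoryTheory

section Adjunction

variable {B C D : Type*} [Category B] [Category C] [Category D]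
  [HasZeroMorphisms B] [HasZeroMorphisms C] [HasZeroMorphisms D]

lemma Adjunction.eq_zero_of_forall_eq_zero_s13 {F : C ⥤ D} {G : D ⥤ C} (adj : F ⊣ G) {a : C} {x : D}
    (hz : ∀ ψ : F.obj a ⟶ x, ψ = 0) (φ : a ⟶ G.obj x) : φ = 0 :=
  (adj.homEquiv a x).symm.injective
    (by rw [hz ((adj.homEquiv a x).symm φ), hz ((adj.homEquiv a x).symm 0)])

lemma Adjunction.isZero_obj_obj_of_isZero_obj_obj {L₁ : C ⥤ D} {R₁ : D ⥤ C} {L₂ : B ⥤ C}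
    {R₂ : C ⥤ B} (adj₁ : L₁ ⊣ R₁) (adj₂ : L₂ ⊣ R₂) (hL : ∀ b, IsZero (L₁.obj (L₂.obj b)))
    (d : D) : IsZero (R₂.obj (R₁.obj d)) := by
  rw [IsZero.iff_id_eq_zero]
  exact adj₂.eq_zero_of_forall_eq_zero_s13
    (fun ψ => adj₁.eq_zero_of_forall_eq_zero_s13 (fun χ => (hL _).eq_of_src χ 0) ψ) (𝟙 _)

end Adjunction

namespace Pretriangulated

variable {C : Type*} [Category C] [HasZeroObject C] [Preadditive C] [HasShift C ℤ]
  [∀ n : ℤ, (shiftFunctor C n).Additive] [Pretriangulated C]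

noncomputable def isoObj₁OfIso₂₃ (T₁ T₂ : Triangle C)
    (hT₁ : T₁ ∈ distTriang C) (hT₂ : T₂ ∈ distTriang C)
    (e₂ : T₁.obj₂ ≅ T₂.obj₂) (e₃ : T₁.obj₃ ≅ T₂.obj₃)
    (comm : T₁.mor₂ ≫ e₃.hom = e₂.hom ≫ T₂.mor₂) : T₁.obj₁ ≅ T₂.obj₁ :=
  (shiftFunctor C (1 : ℤ)).preimageIso
    (Triangle.π₃.mapIso (isoTriangleOfIso₁₂ T₁.rotate T₂.rotate
      (rot_of_distTriang _ hT₁) (rot_of_distTriang _ hT₂) e₂ e₃ comm))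

noncomputable def isoObj₃OfIso₁₂ (T₁ T₂ : Triangle C)
    (hT₁ : T₁ ∈ distTriang C) (hT₂ : T₂ ∈ distTriang C)
    (e₁ : T₁.obj₁ ≅ T₂.obj₁) (e₂ : T₁.obj₂ ≅ T₂.obj₂)
    (comm : T₁.mor₁ ≫ e₂.hom = e₁.hom ≫ T₂.mor₁) : T₁.obj₃ ≅ T₂.obj₃ :=
  Triangle.π₃.mapIso (isoTriangleOfIso₁₂ T₁ T₂ hT₁ hT₂ e₁ e₂ comm)

end Pretriangulated

section TriangulatedFunctor

variable {C D : Type*} [Category C] [HasZeroObject C] [Preadditive C] [HasShift C ℤ]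
  [∀ n : ℤ, (shiftFunctor C n).Additive] [Pretriangulated C]
  [Category D] [HasZeroObject D] [Preadditive D] [HasShift D ℤ]
  [∀ n : ℤ, (shiftFunctor D n).Additive] [Pretriangulated D]
  (F : C ⥤ D) [F.CommShift ℤ] [F.IsTriangulated]

noncomputable def Functor.mapConeCompIsoOfIsIsoLeft {X Y Z W W' : C} (f : X ⟶ Y) (g : Y ⟶ Z)
    [IsIso (F.map f)] {u : Z ⟶ W} {δ : W ⟶ X⟦(1 : ℤ)⟧} (hT : Triangle.mk (f ≫ g) u δ ∈ distTriang C)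
    {u' : Z ⟶ W'} {δ' : W' ⟶ Y⟦(1 : ℤ)⟧} (hT' : Triangle.mk g u' δ' ∈ distTriang C) :
    F.obj W ≅ F.obj W' :=
  isoObj₃OfIso₁₂ _ _ (F.map_distinguished _ hT) (F.map_distinguished _ hT')
    (asIso (F.map f) : F.obj X ≅ F.obj Y) (Iso.refl _)
    ((comp_id _).trans (F.map_comp f g))

noncomputable def Functor.mapConeCompIsoOfIsIsoRight {X Y Z W W' : C} (f : X ⟶ Y) (g : Y ⟶ Z)
    [IsIso (F.map g)] {u : Z ⟶ W} {δ : W ⟶ X⟦(1 : ℤ)⟧} (hT : Triangle.mk (f ≫ g) u δ ∈ distTriang C)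
    {u' : Y ⟶ W'} {δ' : W' ⟶ X⟦(1 : ℤ)⟧} (hT' : Triangle.mk f u' δ' ∈ distTriang C) :
    F.obj W ≅ F.obj W' :=
  isoObj₃OfIso₁₂ _ _ (F.map_distinguished _ hT) (F.map_distinguished _ hT')
    (Iso.refl _) (asIso (F.map g) : F.obj Y ≅ F.obj Z).symm
    (show F.map (f ≫ g) ≫ (asIso (F.map g)).inv = 𝟙 _ ≫ F.map f by simp)

lemma exists_distTriang_truncation_fiber {G : D ⥤ C} (adj : F ⊣ G) [IsIso adj.counit]
    {A B : Set D} (t : IsTStructure A B) (h : C) :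
    ∃ (v : C) (b : D) (p : v ⟶ h) (q : h ⟶ G.obj b) (δ : G.obj b ⟶ v⟦(1 : ℤ)⟧),
      Triangle.mk p q δ ∈ distTriang C ∧ F.obj v ∈ A ∧ b ∈ B := by
  obtain ⟨a, b, ha, hb, α, β, γ, hT⟩ := t.decomp (F.obj h)
  obtain ⟨v, p, δ, hS⟩ := distinguished_cocone_triangle₁ (adj.unit.app h ≫ G.map β)
  have e : F.obj v ≅ a := isoObj₁OfIso₂₃ _ _ (F.map_distinguished _ hS) hT
    (Iso.refl _) (asIso (adj.counit.app b) : F.obj (G.obj b) ≅ b)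
    (show F.map (adj.unit.app h ≫ G.map β) ≫ adj.counit.app b = 𝟙 _ ≫ β by simp)
  exact ⟨v, b, p, _, δ, hS, t.isoClosedA e.symm ha, hb⟩

end TriangulatedFunctor

end CategoryTheory

section Gluing

def gluedLE (jStar : DX ⥤ DU) (iStar : DX ⥤ DZ) (AU : Set DU) (AZ : Set DZ) : Set DX :=
  {a | jStar.obj a ∈ AU ∧ iStar.obj a ∈ AZ}

def gluedGT (jStar : DX ⥤ DU) (iShriek : DX ⥤ DZ) (BU : Set DU) (BZ : Set DZ) : Set DX :=
  {a | jStar.obj a ∈ BU ∧ iShriek.obj a ∈ BZ}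

variable {jStar : DX ⥤ DU} {jLower : DU ⥤ DX} {iStar : DX ⥤ DZ} {iLower : DZ ⥤ DX}
  {iShriek : DX ⥤ DZ} {AU BU : Set DU} {AZ BZ : Set DZ}

lemma gluedLE_gluedGT_hom_eq_zero (adj2 : jStar ⊣ jLower) (adj3 : iStar ⊣ iLower)
    (adj4 : iLower ⊣ iShriek)
    (loc2 : ∀ A : DX, ∃ h : jLower.obj (jStar.obj A) ⟶ (iLower.obj (iShriek.obj A))⟦(1 : ℤ)⟧,
      Triangle.mk (adj4.counit.app A) (adj2.unit.app A) h ∈ distTriang DX)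
    (tU : IsTStructure AU BU) (tZ : IsTStructure AZ BZ)
    {a b : DX} (ha : a ∈ gluedLE jStar iStar AU AZ) (hb : b ∈ gluedGT jStar iShriek BU BZ)
    (f : a ⟶ b) : f = 0 := by
  obtain ⟨δ, hT⟩ := loc2 b
  have hf : f ≫ adj2.unit.app b = 0 :=
    adj2.eq_zero_of_forall_eq_zero_s13 (tU.orth _ ha.1 _ hb.1) _
  obtain ⟨f', hf'⟩ := Triangle.coyoneda_exact₂ _ hT f hf
  rw [hf', adj3.eq_zero_of_forall_eq_zero_s13 (tZ.orth _ ha.2 _ hb.2) f']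
  exact zero_comp

variable [jStar.CommShift ℤ] [jStar.IsTriangulated] [iStar.CommShift ℤ] [iStar.IsTriangulated]
  [iShriek.CommShift ℤ] [iShriek.IsTriangulated]

lemma exists_distTriang_gluedLE_gluedGT (adj2 : jStar ⊣ jLower) (adj3 : iStar ⊣ iLower)
    (adj4 : iLower ⊣ iShriek) (hvanish : ∀ z : DZ, IsZero (jStar.obj (iLower.obj z)))
    [IsIso adj2.counit] [IsIso adj3.counit] [IsIso adj4.unit]
    (tU : IsTStructure AU BU) (tZ : IsTStructure AZ BZ) (h : DX) :
    ∃ (v w : DX) (_ : v ∈ gluedLE jStar iStar AU AZ) (_ : w ∈ gluedGT jStar iShriek BU BZ)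
      (f : v ⟶ h) (g : h ⟶ w) (δ : w ⟶ v⟦(1 : ℤ)⟧), Triangle.mk f g δ ∈ distTriang DX := by
  obtain ⟨v₁, bU, p₁, _, _, hT₁, hv₁U, hbU⟩ := exists_distTriang_truncation_fiber jStar adj2 tU h
  obtain ⟨v, bZ, p₂, _, _, hT₂, hvZ, hbZ⟩ := exists_distTriang_truncation_fiber iStar adj3 tZ v₁
  obtain ⟨w, g, δ, hT⟩ := distinguished_cocone_triangle (p₂ ≫ p₁)
  have : IsIso (jStar.map p₂) :=
    (Triangle.isZero₃_iff_isIso₁ _ (jStar.map_distinguished _ hT₂)).1 (hvanish bZ)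
  have : IsIso (iShriek.map p₁) :=
    (Triangle.isZero₃_iff_isIso₁ _ (iShriek.map_distinguished _ hT₁)).1
      (adj2.isZero_obj_obj_of_isZero_obj_obj adj4 hvanish bU)
  have hwU : jStar.obj w ∈ BU := tU.isoClosedB
    (jStar.mapConeCompIsoOfIsIsoLeft p₂ p₁ hT hT₁ ≪≫ asIso (adj2.counit.app bU)).symm hbU
  have hwZ : iShriek.obj w ∈ BZ := tZ.isoClosedB
    (iShriek.mapConeCompIsoOfIsIsoRight p₂ p₁ hT hT₂ ≪≫ (asIso (adj4.unit.app bZ)).symm).symm hbZ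
  exact ⟨v, w, ⟨tU.isoClosedA (asIso (jStar.map p₂)).symm hv₁U, hvZ⟩, ⟨hwU, hwZ⟩, _, g, δ, hT⟩

lemma isTStructure_glued (adj2 : jStar ⊣ jLower) (adj3 : iStar ⊣ iLower)
    (adj4 : iLower ⊣ iShriek) (hvanish : ∀ z : DZ, IsZero (jStar.obj (iLower.obj z)))
    (loc2 : ∀ A : DX, ∃ h : jLower.obj (jStar.obj A) ⟶ (iLower.obj (iShriek.obj A))⟦(1 : ℤ)⟧,
      Triangle.mk (adj4.counit.app A) (adj2.unit.app A) h ∈ distTriang DX)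
    [IsIso adj2.counit] [IsIso adj3.counit] [IsIso adj4.unit]
    (tU : IsTStructure AU BU) (tZ : IsTStructure AZ BZ) :
    IsTStructure (gluedLE jStar iStar AU AZ) (gluedGT jStar iShriek BU BZ) where
  isoClosedA _ _ e ha := ⟨tU.isoClosedA (jStar.mapIso e) ha.1, tZ.isoClosedA (iStar.mapIso e) ha.2⟩
  isoClosedB _ _ e hb :=
    ⟨tU.isoClosedB (jStar.mapIso e) hb.1, tZ.isoClosedB (iShriek.mapIso e) hb.2⟩
  orth _ ha _ hb := gluedLE_gluedGT_hom_eq_zero adj2 adj3 adj4 loc2 tU tZ ha hb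
  shiftA a ha :=
    ⟨tU.isoClosedA ((jStar.commShiftIso (1 : ℤ)).app a).symm (tU.shiftA _ ha.1),
      tZ.isoClosedA ((iStar.commShiftIso (1 : ℤ)).app a).symm (tZ.shiftA _ ha.2)⟩
  shiftB b hb :=
    ⟨tU.isoClosedB ((jStar.commShiftIso (-1 : ℤ)).app b).symm (tU.shiftB _ hb.1),
      tZ.isoClosedB ((iShriek.commShiftIso (-1 : ℤ)).app b).symm (tZ.shiftB _ hb.2)⟩
  decomp := exists_distTriang_gluedLE_gluedGT adj2 adj3 adj4 hvanish tU tZ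

end Gluing

theorem stmt13_general
    (jStar : DX ⥤ DU) (jLower : DU ⥤ DX)
    (iStar : DX ⥤ DZ) (iLower : DZ ⥤ DX) (iShriek : DX ⥤ DZ)
    [jStar.CommShift ℤ] [jStar.IsTriangulated]
    [iStar.CommShift ℤ] [iStar.IsTriangulated]
    [iShriek.CommShift ℤ] [iShriek.IsTriangulated]
    (adj2 : jStar ⊣ jLower)
    (adj3 : iStar ⊣ iLower) (adj4 : iLower ⊣ iShriek)
    (hvanish : ∀ z : DZ, IsZero (jStar.obj (iLower.obj z)))
    (loc2 : ∀ A : DX, ∃ h : jLower.obj (jStar.obj A) ⟶ (iLower.obj (iShriek.obj A))⟦(1 : ℤ)⟧,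
      Triangle.mk (adj4.counit.app A) (adj2.unit.app A) h ∈ distTriang DX)
    (hc2 : IsIso adj2.counit)
    (hc3 : IsIso adj3.counit) (hu4 : IsIso adj4.unit)
    (AU BU : Set DU) (AZ BZ : Set DZ)
    (tU : IsTStructure AU BU) (tZ : IsTStructure AZ BZ) :
    letI AX : Set DX := {a | jStar.obj a ∈ AU ∧ iStar.obj a ∈ AZ}
    letI BX : Set DX := {a | jStar.obj a ∈ BU ∧ iShriek.obj a ∈ BZ}
    (∀ h : DX, ∃ (v w : DX) (_ : v ∈ AX) (_ : w ∈ BX)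
      (f : v ⟶ h) (g : h ⟶ w) (δ : w ⟶ v⟦(1 : ℤ)⟧),
      Triangle.mk f g δ ∈ distTriang DX) ∧
    IsTStructure AX BX := by
  have := hc2; have := hc3; have := hu4
  have t := isTStructure_glued adj2 adj3 adj4 hvanish loc2 tU tZ
  exact ⟨t.decomp, t⟩

/-- in a recollement of `D_X` by `D_U` and `D_Z` with t-structures on `D_U`
and `D_Z`, every object `h ∈ D_X` admits a distinguished triangle `v → h → w →` with
`v ∈ D^{≤}(X)` and `w ∈ D^{>}(X)` defined punctually; hence the glued pair is a
t-structure on `D_X` (the gluing theorem of BBD §1.4). -/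
theorem stmt13
    (jShriek : DU ⥤ DX) (jStar : DX ⥤ DU) (jLower : DU ⥤ DX)
    (iStar : DX ⥤ DZ) (iLower : DZ ⥤ DX) (iShriek : DX ⥤ DZ)
    [jShriek.CommShift ℤ] [jShriek.IsTriangulated]
    [jStar.CommShift ℤ] [jStar.IsTriangulated]
    [jLower.CommShift ℤ] [jLower.IsTriangulated]
    [iStar.CommShift ℤ] [iStar.IsTriangulated]
    [iLower.CommShift ℤ] [iLower.IsTriangulated]
    [iShriek.CommShift ℤ] [iShriek.IsTriangulated]
    (adj1 : jShriek ⊣ jStar) (adj2 : jStar ⊣ jLower)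
    (adj3 : iStar ⊣ iLower) (adj4 : iLower ⊣ iShriek)
    (hvanish : ∀ z : DZ, IsZero (jStar.obj (iLower.obj z)))
    (loc1 : ∀ A : DX, ∃ h : iLower.obj (iStar.obj A) ⟶ (jShriek.obj (jStar.obj A))⟦(1 : ℤ)⟧,
      Triangle.mk (adj1.counit.app A) (adj3.unit.app A) h ∈ distTriang DX)
    (loc2 : ∀ A : DX, ∃ h : jLower.obj (jStar.obj A) ⟶ (iLower.obj (iShriek.obj A))⟦(1 : ℤ)⟧,
      Triangle.mk (adj4.counit.app A) (adj2.unit.app A) h ∈ distTriang DX)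
    (hu1 : IsIso adj1.unit) (hc2 : IsIso adj2.counit)
    (hc3 : IsIso adj3.counit) (hu4 : IsIso adj4.unit)
    (AU BU : Set DU) (AZ BZ : Set DZ)
    (tU : IsTStructure AU BU) (tZ : IsTStructure AZ BZ) :
    letI AX : Set DX := {a | jStar.obj a ∈ AU ∧ iStar.obj a ∈ AZ}
    letI BX : Set DX := {a | jStar.obj a ∈ BU ∧ iShriek.obj a ∈ BZ}
    (∀ h : DX, ∃ (v w : DX) (_ : v ∈ AX) (_ : w ∈ BX)
      (f : v ⟶ h) (g : h ⟶ w) (δ : w ⟶ v⟦(1 : ℤ)⟧),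
      Triangle.mk f g δ ∈ distTriang DX) ∧
    IsTStructure AX BX :=
  stmt13_general jStar jLower iStar iLower iShriek adj2 adj3 adj4 hvanish loc2 hc2 hc3 hu4 AU BU AZ
    BZ tU tZ
end
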